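/- arXiv:q-alg/9605025 — 9 statements merged into one kernel-verified Lean document; each statement's English description precedes it below -/
import Mathlib

section
/- Let M be a finite free module over ℂ⟦h⟧ and let σ : M → M be a q-conjugation on M, i.e. an additive involutive map satisfying σ(c • m) = (∼c) • σ(m) for all c ∈ ℂ⟦h⟧ and m ∈ M, and σ(m) − m ∈ h • M for all m ∈ M. Then there exists a ℂ⟦h⟧-basis (b_i) of M with σ(b_i) = b_i for all i. -/
/-!
Average a basis with its conjugate: `b i = ½ (e i + σ (e i))` is fixed by `σ`, because `σ` is
an involution and `∼` fixes the constant `½`, and `b i ≡ e i` modulo `h`. Since `h` lies in the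
Jacobson radical of `ℂ⟦h⟧`, Nakayama's lemma shows that `b` spans `M`; the endomorphism sending
`e` to `b` is then surjective, hence bijective, so `b` is a basis.
-/

open PowerSeries

theorem PowerSeries.rescale_C {R : Type*} [CommSemiring R] (a c : R) :
    rescale a (C c) = C c := by
  ext (_ | n) <;> simp [coeff_rescale, coeff_C]

theorem PowerSeries.X_mem_jacobson_bot {R : Type*} [CommRing R] :
    (X : R⟦X⟧) ∈ (⊥ : Ideal R⟦X⟧).jacobson :=
  Ideal.mem_jacobson_bot.mpr fun _ => isUnit_iff_constantCoeff.mpr (by simp)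

theorem smul_add_sub_of_add_self_eq_one {R M : Type*} [Ring R] [AddCommGroup M] [Module R M]
    {c : R} (hc : c + c = 1) (m n : M) : c • (m + n) - m = c • (n - m) :=
  calc c • (m + n) - m = c • (m + n) - (c + c) • m := by rw [hc, one_smul]
    _ = c • (n - m) := by rw [smul_add, smul_sub, add_smul]; abel

theorem Module.Basis.exists_basis_eq_of_sub_mem_smul_top {ι R M : Type*} [CommRing R]
    [AddCommGroup M] [Module R M] [Module.Finite R M] (e : Module.Basis ι R M) {I : Ideal R}
    (hI : I ≤ (⊥ : Ideal R).jacobson) (f : ι → M)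
    (hf : ∀ i, f i - e i ∈ I • (⊤ : Submodule R M)) :
    ∃ b : Module.Basis ι R M, ⇑b = f := by
  have hspan : Submodule.span R (Set.range f) = ⊤ := by
    refine top_le_iff.mp (Submodule.le_of_le_smul_of_le_jacobson_bot Module.Finite.fg_top hI ?_)
    rw [← e.span_eq, Submodule.span_le]
    rintro _ ⟨i, rfl⟩
    rw [e.span_eq, ← sub_sub_cancel (f i) (e i)]
    exact Submodule.sub_mem_sup (Submodule.subset_span ⟨i, rfl⟩) (hf i)
  have hsurj : Function.Surjective (e.constr R f) := by
    rw [← LinearMap.range_eq_top, e.constr_range, hspan]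
  refine ⟨e.map (.ofBijective _ (OrzechProperty.bijective_of_surjective_endomorphism _ hsurj)), ?_⟩
  ext i
  simp

/-- Let `M` be a finite free module over `ℂ⟦h⟧` and let `σ : M → M` be a
q-conjugation on `M`, i.e. an additive involutive map satisfying
`σ (c • m) = (rescale (-1) c) • σ m` (semilinearity with respect to the q-conjugation
`∼ = rescale (-1)` on `ℂ⟦h⟧`) and `σ m - m ∈ h • M` for all `m`.  Then there exists a
`ℂ⟦h⟧`-basis `(b i)` of `M` with `σ (b i) = b i` for all `i`. -/
theorem qConjugation_invariant_basis_exists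
    (M : Type) [AddCommGroup M] [Module (PowerSeries ℂ) M]
    [Module.Free (PowerSeries ℂ) M] [Module.Finite (PowerSeries ℂ) M]
    (σ : M → M)
    (hadd : ∀ m m' : M, σ (m + m') = σ m + σ m')
    (hsmul : ∀ (c : PowerSeries ℂ) (m : M), σ (c • m) = (PowerSeries.rescale (-1 : ℂ) c) • σ m)
    (hinv : ∀ m : M, σ (σ m) = m)
    (hmod : ∀ m : M, ∃ m' : M, σ m - m = (PowerSeries.X : PowerSeries ℂ) • m') :
    ∃ (ι : Type) (_ : Fintype ι) (b : Module.Basis ι (PowerSeries ℂ) M), ∀ i : ι, σ (b i) = b i := by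
  set e := Module.Free.chooseBasis (PowerSeries ℂ) M
  set half : PowerSeries ℂ := C (1 / 2 : ℂ)
  have half_add_half : half + half = 1 := by rw [← map_add]; norm_num
  have average_congr (i) : half • (e i + σ (e i)) - e i ∈
      Ideal.span {(X : PowerSeries ℂ)} • (⊤ : Submodule (PowerSeries ℂ) M) := by
    obtain ⟨m, hm⟩ := hmod (e i)
    rw [smul_add_sub_of_add_self_eq_one half_add_half, hm]
    exact Submodule.smul_mem _ _ (Submodule.smul_mem_smul (Ideal.mem_span_singleton_self _) trivial)
  obtain ⟨b, hb⟩ := e.exists_basis_eq_of_sub_mem_smul_top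
    ((Ideal.span_singleton_le_iff_mem _).mpr X_mem_jacobson_bot) _ average_congr
  refine ⟨_, inferInstance, b, fun i => ?_⟩
  rw [hb]
  simp only [half, hsmul, hadd, hinv, rescale_C, add_comm]
end

section
/- For the quantum Lie algebra (sl₂)_h, the quantum Lie product is q-antisymmetric: for all a, b ∈ M one has σ([a, b]_h) = −[σ(b), σ(a)]_h, where σ is the q-conjugation on M fixing the basis X⁺, X⁻, H. -/
open PowerSeries

/-- The quantum parameter `q = exp h ∈ ℂ⟦h⟧`. -/
noncomputable def qParam : PowerSeries ℂ := PowerSeries.exp ℂ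

/-- Its inverse `q⁻¹ = exp (-h)`, obtained from `q` by the substitution `h ↦ -h`. -/
noncomputable def qParamInv : PowerSeries ℂ := PowerSeries.rescale (-1 : ℂ) (PowerSeries.exp ℂ)

/-- Structure constants of the quantum Lie algebra `(sl₂)_h` in the basis
`X⁺ = e 0`, `X⁻ = e 1`, `H = e 2`:  `sl2c i j k` is the coefficient of the basis vector `k`
in `[e i, e j]_h`.  They encode
`[X⁺,X⁻]_h = H`, `[X⁻,X⁺]_h = -H`, `[H,X⁺]_h = 2q•X⁺`, `[H,X⁻]_h = -2q⁻¹•X⁻`,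
`[X⁺,H]_h = -2q⁻¹•X⁺`, `[X⁻,H]_h = 2q•X⁻`, `[H,H]_h = 2(q-q⁻¹)•H`,
`[X⁺,X⁺]_h = [X⁻,X⁻]_h = 0`. -/
noncomputable def sl2c : Fin 3 → Fin 3 → Fin 3 → PowerSeries ℂ :=
  ![![![0, 0, 0], ![0, 0, 1], ![-(2 * qParamInv), 0, 0]],
    ![![0, 0, -1], ![0, 0, 0], ![0, 2 * qParam, 0]],
    ![![2 * qParam, 0, 0], ![0, -(2 * qParamInv), 0], ![0, 0, 2 * (qParam - qParamInv)]]]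

/-- The quantum Lie product of `(sl₂)_h` on `M = ℂ⟦h⟧³`, the `ℂ⟦h⟧`-bilinear map determined
by the structure constants `sl2c` on the standard basis. -/
noncomputable def sl2Bracket (a b : Fin 3 → PowerSeries ℂ) : Fin 3 → PowerSeries ℂ :=
  fun k => ∑ i : Fin 3, ∑ j : Fin 3, a i * b j * sl2c i j k

/-- The q-conjugation `σ` on `M = ℂ⟦h⟧³` fixing the basis `X⁺, X⁻, H`: it acts on each
coordinate by the q-conjugation `∼ = rescale (-1)` of `ℂ⟦h⟧`. -/
noncomputable def sl2Conj (a : Fin 3 → PowerSeries ℂ) : Fin 3 → PowerSeries ℂ :=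
  fun i => PowerSeries.rescale (-1 : ℂ) (a i)


lemma rescale_neg_one_neg_one (f : PowerSeries ℂ) :
    PowerSeries.rescale (-1 : ℂ) (PowerSeries.rescale (-1 : ℂ) f) = f := by
  rw [PowerSeries.rescale_rescale]
  norm_num [PowerSeries.rescale_one]

lemma rescale_qParam : PowerSeries.rescale (-1 : ℂ) qParam = qParamInv := rfl

lemma rescale_qParamInv : PowerSeries.rescale (-1 : ℂ) qParamInv = qParam :=
  rescale_neg_one_neg_one _

/-- the quantum Lie product of `(sl₂)_h` is q-antisymmetric:
`σ ([a,b]_h) = -[σ b, σ a]_h` for all `a b ∈ M`. -/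
theorem sl2_q_antisymmetric (a b : Fin 3 → PowerSeries ℂ) :
    sl2Conj (sl2Bracket a b) = -(sl2Bracket (sl2Conj b) (sl2Conj a)) := by
  funext k
  simp only [sl2Conj, sl2Bracket, Pi.neg_apply, Fin.sum_univ_three, map_add, map_mul]
  fin_cases k <;>
    simp [sl2c, Matrix.vecHead, Matrix.vecTail, rescale_qParam, rescale_qParamInv, map_sub, map_neg, map_ofNat] <;> ring
end

section
/- For all integers n ≥ 2, all i, j with 1 ≤ i, j ≤ n and all k with 1 ≤ k ≤ n−1, the structure constants l of (sl_n)_h satisfy the q-antisymmetry identity l(i,j,k; q⁻¹,s,t) = −l(j,i,k; q,s,t), i.e. substituting q ↦ q⁻¹ while keeping s and t fixed and exchanging i and j negates l. -/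
/-- The structure constants `l(i,j,k; q,s,t)` of the quantum Lie algebra `(sl_n)_h(t/s)`:
`l(i,j,k) = (q^(1-k)·δ[k=i] - q^(-1-k)·δ[k=i-1])·(s + t·qⁿ)
          - (q^(k-1)·δ[k=j] - q^(k+1)·δ[k=j-1])·(s + t·q⁻ⁿ)`,
appearing in `[H_k, X_{ij}]_h = l_{ij}(H_k)·X_{ij}`. -/
noncomputable def slnL {R : Type*} [CommRing R] (q : Rˣ) (s t : R) (n i j k : ℤ) : R :=
  ((q ^ (1 - k) : Rˣ) * (if k = i then (1 : R) else 0)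
      - (q ^ (-1 - k) : Rˣ) * (if k = i - 1 then (1 : R) else 0)) * (s + t * (q ^ n : Rˣ))
    - ((q ^ (k - 1) : Rˣ) * (if k = j then (1 : R) else 0)
      - (q ^ (k + 1) : Rˣ) * (if k = j - 1 then (1 : R) else 0)) * (s + t * (q ^ (-n) : Rˣ))

/-- q-antisymmetry of the structure constants `l` of `(sl_n)_h`:
for `n ≥ 2`, `1 ≤ i, j ≤ n`, `1 ≤ k ≤ n-1`, substituting `q ↦ q⁻¹` (keeping `s`, `t` fixed)
and exchanging `i` and `j` negates `l`:  `l(i,j,k; q⁻¹,s,t) = -l(j,i,k; q,s,t)`. -/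
theorem slnL_q_antisymmetric {R : Type*} [CommRing R] (q : Rˣ) (s t : R) (n i j k : ℤ)
    (hn : 2 ≤ n) (hi1 : 1 ≤ i) (hin : i ≤ n) (hj1 : 1 ≤ j) (hjn : j ≤ n)
    (hk1 : 1 ≤ k) (hkn : k ≤ n - 1) :
    slnL q⁻¹ s t n i j k = -slnL q s t n j i k := by
  simp only [slnL, inv_zpow, ← zpow_neg]
  rw [show -(1 - k) = k - 1 by ring, show -(-1 - k) = k + 1 by ring,
    show -(k - 1) = 1 - k by ring, show -(k + 1) = -1 - k by ring, neg_neg]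
  ring
end

section
/- For all integers n ≥ 2 and all i, j, k with 1 ≤ i, j, k ≤ n−1, the Cartan structure constants f of (sl_n)_h satisfy the q-antisymmetry identity f(i,j,k; q⁻¹,s,t) = −f(j,i,k; q,s,t), i.e. substituting q ↦ q⁻¹ while keeping s and t fixed and exchanging i and j negates f. -/
/-- The Cartan structure constants `f(i,j,k; q,s,t)` of the quantum Lie algebra
`(sl_n)_h(t/s)`, appearing in `[H_i, H_j]_h = f_{ij}^k·H_k`. -/
noncomputable def slnF {R : Type*} [CommRing R] (q : Rˣ) (s t : R) (n i j k : ℤ) : R :=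
  (if i = j then (1 : R) else 0) *
      ((if k = i then (1 : R) else 0) *
          (s * ((q ^ (k + 1) : Rˣ) - (q ^ (-k - 1) : Rˣ))
            + t * ((q ^ (n + 1 - i) : Rˣ) - (q ^ (-n - 1 + i) : Rˣ)))
        + s * (if k < i then (1 : R) else 0) * ((q : R) + (q⁻¹ : Rˣ))
            * ((q ^ k : Rˣ) - (q ^ (-k) : Rˣ))
        + t * (if i < k then (1 : R) else 0) * ((q : R) + (q⁻¹ : Rˣ))
            * ((q ^ (n - k) : Rˣ) - (q ^ (-n + k) : Rˣ)))
    + (if i = j - 1 then (1 : R) else 0) *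
        (s * (if k ≤ i then (1 : R) else 0) * ((q ^ (-k) : Rˣ) - (q ^ k : Rˣ))
          + t * (if i < k then (1 : R) else 0) * ((q ^ (k - n) : Rˣ) - (q ^ (n - k) : Rˣ)))
    + (if j = i - 1 then (1 : R) else 0) *
        (s * (if k ≤ j then (1 : R) else 0) * ((q ^ (-k) : Rˣ) - (q ^ k : Rˣ))
          + t * (if j < k then (1 : R) else 0) * ((q ^ (k - n) : Rˣ) - (q ^ (n - k) : Rˣ)))

/-- q-antisymmetry of the Cartan structure constants `f` of `(sl_n)_h`:
for `n ≥ 2` and `1 ≤ i, j, k ≤ n-1`, substituting `q ↦ q⁻¹` (keeping `s`, `t` fixed) and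
exchanging `i` and `j` negates `f`:  `f(i,j,k; q⁻¹,s,t) = -f(j,i,k; q,s,t)`. -/
theorem slnF_q_antisymmetric {R : Type*} [CommRing R] (q : Rˣ) (s t : R) (n i j k : ℤ)
    (hn : 2 ≤ n) (hi1 : 1 ≤ i) (hin : i ≤ n - 1) (hj1 : 1 ≤ j) (hjn : j ≤ n - 1)
    (hk1 : 1 ≤ k) (hkn : k ≤ n - 1) :
    slnF q⁻¹ s t n i j k = -slnF q s t n j i k := by
  simp only [slnF, inv_zpow', inv_inv]
  by_cases h1 : i = j
  · subst h1
    have h2 : ¬ i = i - 1 := by omega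
    simp only [if_pos rfl, h2, if_neg, if_false]
    rcases lt_trichotomy k i with h | h | h
    · have h3 : ¬ k = i := by omega
      have h4 : ¬ i < k := by omega
      simp only [h3, h4, if_neg, if_pos h, if_false]
      ring_nf
    · subst h
      simp only [if_pos rfl, lt_irrefl, if_neg, if_false]
      ring_nf
    · have h3 : ¬ k = i := by omega
      have h4 : ¬ k < i := by omega
      simp only [h3, h4, if_neg, if_pos h, if_false]
      ring_nf
  · by_cases h2 : i = j - 1
    · have h3 : ¬ j = i - 1 := by omega
      have h4 : ¬ j = i := by omega
      simp only [h1, h4, h3, if_neg, if_pos h2, if_false, zero_mul, zero_add, add_zero]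
      by_cases h5 : k ≤ i
      · have h6 : ¬ i < k := by omega
        simp only [if_pos h5, h6, if_neg, if_false]
        ring_nf
      · have h6 : i < k := by omega
        simp only [h5, if_neg, if_pos h6, if_false]
        ring_nf
    · by_cases h3 : j = i - 1
      · have h4 : ¬ j = i := by omega
        have h5 : ¬ i = j - 1 := by omega
        simp only [h1, h4, h2, h5, if_neg, if_pos h3, if_false, zero_mul, zero_add, add_zero]
        by_cases h6 : k ≤ j
        · have h7 : ¬ j < k := by omega
          simp only [if_pos h6, h7, if_neg, if_false]
          ring_nf
        · have h7 : j < k := by omega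
          simp only [h6, if_neg, if_pos h7, if_false]
          ring_nf
      · have h4 : ¬ j = i := by omega
        simp [h1, h2, h3, h4]
end

section
/- For all integers n ≥ 2, all i, j with 1 ≤ i, j ≤ n and all k with 1 ≤ k ≤ n−1, the structure constants g of (sl_n)_h satisfy the q-antisymmetry identity g(i,j,k; q⁻¹,s,t) = −g(j,i,k; q,s,t), i.e. substituting q ↦ q⁻¹ while keeping s and t fixed and exchanging i and j negates g. -/
/-- The structure constants `g(i,j,k; q,s,t)` of the quantum Lie algebra `(sl_n)_h(t/s)`:
`g(i,j,k) = q^(i-j)·( s·(q^k·δ[k<j] - q^(-k)·δ[k<i]) + t·(q^(n-k)·δ[k≥i] - q^(k-n)·δ[k≥j]) )`,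
appearing in `[X_{ij}, X_{ji}]_h = g_{ij}^k·H_k`. -/
noncomputable def slnG {R : Type*} [CommRing R] (q : Rˣ) (s t : R) (n i j k : ℤ) : R :=
  (q ^ (i - j) : Rˣ) *
    (s * ((q ^ k : Rˣ) * (if k < j then (1 : R) else 0)
        - (q ^ (-k) : Rˣ) * (if k < i then (1 : R) else 0))
      + t * ((q ^ (n - k) : Rˣ) * (if i ≤ k then (1 : R) else 0)
        - (q ^ (k - n) : Rˣ) * (if j ≤ k then (1 : R) else 0)))

/-- q-antisymmetry of the structure constants `g` of `(sl_n)_h`: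
for `n ≥ 2`, `1 ≤ i, j ≤ n`, `1 ≤ k ≤ n-1`, substituting `q ↦ q⁻¹` (keeping `s`, `t` fixed)
and exchanging `i` and `j` negates `g`:  `g(i,j,k; q⁻¹,s,t) = -g(j,i,k; q,s,t)`. -/
theorem slnG_q_antisymmetric {R : Type*} [CommRing R] (q : Rˣ) (s t : R) (n i j k : ℤ)
    (hn : 2 ≤ n) (hi1 : 1 ≤ i) (hin : i ≤ n) (hj1 : 1 ≤ j) (hjn : j ≤ n)
    (hk1 : 1 ≤ k) (hkn : k ≤ n - 1) :
    slnG q⁻¹ s t n i j k = -slnG q s t n j i k := by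
  simp only [slnG, inv_zpow', Units.val_mul, neg_sub, neg_neg]
  ring
end

section
/- For all integers n ≥ 2 and all i, j, k with 1 ≤ i, j, k ≤ n−1, the Cartan structure constants f of (sl_n)_h transform under the Dynkin diagram map τ by interchanging the parameters s and t: f(n−i, n−j, n−k; q,s,t) = f(i,j,k; q,t,s). -/
set_option maxHeartbeats 1600000 in
/-- under the Dynkin diagram map `τ` the Cartan structure constants `f` of
`(sl_n)_h` transform by interchanging the parameters `s` and `t`:  for `n ≥ 2` and
`1 ≤ i, j, k ≤ n-1`,  `f(n-i, n-j, n-k; q,s,t) = f(i,j,k; q,t,s)`. -/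
theorem slnF_tau_transform {R : Type*} [CommRing R] (q : Rˣ) (s t : R) (n i j k : ℤ)
    (hn : 2 ≤ n) (hi1 : 1 ≤ i) (hin : i ≤ n - 1) (hj1 : 1 ≤ j) (hjn : j ≤ n - 1)
    (hk1 : 1 ≤ k) (hkn : k ≤ n - 1) :
    slnF q s t n (n - i) (n - j) (n - k) = slnF q t s n i j k := by
  have c1 : (n - i = n - j) ↔ (i = j) := by omega
  have c2 : (n - k = n - i) ↔ (k = i) := by omega
  have c3 : (n - k < n - i) ↔ (i < k) := by omega
  have c4 : (n - i < n - k) ↔ (k < i) := by omega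
  have c5 : (n - i = n - j - 1) ↔ (j = i - 1) := by omega
  have c6 : (n - k ≤ n - i) ↔ (i ≤ k) := by omega
  have c7 : (n - j = n - i - 1) ↔ (i = j - 1) := by omega
  have c8 : (n - k ≤ n - j) ↔ (j ≤ k) := by omega
  have c9 : (n - j < n - k) ↔ (k < j) := by omega
  simp only [slnF, c1, c2, c3, c4, c5, c6, c7, c8, c9, if_true, if_false]
  rcases eq_or_ne i j with rfl | hij
  · rcases lt_trichotomy k i with hk | rfl | hk
    · simp only [if_pos rfl, if_pos hk, if_neg (by omega : ¬ k = i),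
        if_neg (by omega : ¬ i < k), if_pos (by omega : k ≤ i),
        if_neg (by omega : ¬ i ≤ k), if_neg (by omega : ¬ i = i - 1)]
      ring_nf
    · simp only [if_pos rfl, if_neg (by omega : ¬ k < k), if_neg (by omega : ¬ k = k - 1),
        if_pos (le_refl k), if_neg (lt_irrefl k)]
      ring_nf
    · simp only [if_pos rfl, if_pos hk, if_neg (by omega : ¬ k = i),
        if_neg (by omega : ¬ k < i), if_neg (by omega : ¬ k ≤ i),
        if_pos (by omega : i ≤ k), if_neg (by omega : ¬ i = i - 1)]
      ring_nf
  · rcases eq_or_ne i (j - 1) with hij1 | hij1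
    · obtain rfl : j = i + 1 := by omega
      have e1 : ¬ (i = i + 1) := by omega
      have e2 : ¬ (i + 1 = i - 1) := by omega
      rcases lt_trichotomy k i with hk | rfl | hk
      · simp only [if_neg e1, if_neg e2, if_pos hij1, if_pos (by omega : k ≤ i),
          if_neg (by omega : ¬ i < k), if_neg (by omega : ¬ i ≤ k),
          if_pos (by omega : k ≤ i + 1), if_neg (by omega : ¬ i + 1 < k),
          if_neg (by omega : ¬ i + 1 ≤ k), if_pos (by omega : k < i + 1)]
        ring_nf
      · simp only [if_neg e1, if_neg e2, if_pos hij1, if_pos (le_refl k),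
          if_neg (lt_irrefl k), if_pos (by omega : k ≤ k + 1),
          if_neg (by omega : ¬ k + 1 < k), if_neg (by omega : ¬ k + 1 ≤ k),
          if_pos (by omega : k < k + 1)]
        ring_nf
      · rcases eq_or_ne k (i + 1) with rfl | hk2
        · simp only [if_neg e1, if_neg e2, if_pos hij1, if_neg (by omega : ¬ i + 1 ≤ i),
            if_pos (by omega : i < i + 1), if_pos (by omega : i ≤ i + 1),
            if_pos (le_refl (i+1)), if_neg (lt_irrefl (i+1))]
          ring_nf
        · simp only [if_neg e1, if_neg e2, if_pos hij1, if_neg (by omega : ¬ k ≤ i),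
            if_pos hk, if_pos (by omega : i ≤ k), if_neg (by omega : ¬ k ≤ i + 1),
            if_pos (by omega : i + 1 < k), if_pos (by omega : i + 1 ≤ k),
            if_neg (by omega : ¬ k < i + 1)]
          ring_nf
    · rcases eq_or_ne j (i - 1) with hji1 | hji1
      · obtain rfl : j = i - 1 := hji1
        have e1 : ¬ (i = i - 1) := by omega
        have e2 : ¬ (i = i - 1 - 1) := by omega
        rcases lt_trichotomy k i with hk | rfl | hk
        · simp only [if_neg e1, if_neg e2, if_pos rfl, if_pos (by omega : k ≤ i - 1),
            if_neg (by omega : ¬ i - 1 < k),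
            if_pos (by omega : k ≤ i), if_neg (by omega : ¬ i ≤ k),
            if_neg (by omega : ¬ i < k), if_pos hk, if_neg (by omega : ¬ k = i)]
          ring_nf
        · simp only [if_neg e1, if_neg e2, if_pos rfl, if_neg (by omega : ¬ k ≤ k - 1),
            if_pos (by omega : k - 1 < k), if_pos (by omega : k - 1 ≤ k),
            if_pos (le_refl k), if_neg (lt_irrefl k), if_neg (by omega : ¬ k < k - 1)]
          ring_nf
        · simp only [if_neg e1, if_neg e2, if_pos rfl, if_neg (by omega : ¬ k ≤ i - 1),
            if_pos (by omega : i - 1 < k), if_pos (by omega : i - 1 ≤ k),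
            if_neg (by omega : ¬ k ≤ i), if_pos hk, if_pos (by omega : i ≤ k),
            if_neg (by omega : ¬ k = i), if_neg (by omega : ¬ k < i),
            if_neg (by omega : ¬ k < i - 1)]
          ring_nf
      · simp only [if_neg hij, if_neg (by omega : ¬ i = j - 1), if_neg hji1]
        ring_nf
end

section
/- For all integers n ≥ 2, all i, j with 1 ≤ i, j ≤ n and all k with 1 ≤ k ≤ n−1, the structure constants g of (sl_n)_h transform under the Dynkin diagram map τ by interchanging the parameters s and t: g(n+1−j, n+1−i, n−k; q,s,t) = g(i,j,k; q,t,s). -/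
/-- under the Dynkin diagram map `τ` the structure constants `g` of
`(sl_n)_h` transform by interchanging the parameters `s` and `t`:  for `n ≥ 2`,
`1 ≤ i, j ≤ n`, `1 ≤ k ≤ n-1`,  `g(n+1-j, n+1-i, n-k; q,s,t) = g(i,j,k; q,t,s)`. -/
theorem slnG_tau_transform {R : Type*} [CommRing R] (q : Rˣ) (s t : R) (n i j k : ℤ)
    (hn : 2 ≤ n) (hi1 : 1 ≤ i) (hin : i ≤ n) (hj1 : 1 ≤ j) (hjn : j ≤ n)
    (hk1 : 1 ≤ k) (hkn : k ≤ n - 1) :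
    slnG q s t n (n + 1 - j) (n + 1 - i) (n - k) = slnG q t s n i j k := by
  unfold slnG
  rw [show n + 1 - j - (n + 1 - i) = i - j by ring, show n - (n - k) = k by ring,
    show n - k - n = -k by ring,
    show -(n - k) = k - n by ring]
  simp only [show (n - k < n + 1 - i) = (i ≤ k) from propext (by omega),
    show (n - k < n + 1 - j) = (j ≤ k) from propext (by omega),
    show (n + 1 - j ≤ n - k) = (k < j) from propext (by omega),
    show (n + 1 - i ≤ n - k) = (k < i) from propext (by omega)]
  ring
end

section
/- For all integers n ≥ 2 and all integers i, j, l with 1 ≤ i, j, l ≤ n, the structure constants N and M of (sl_n)_h transform under the Dynkin diagram map τ by interchanging the parameters s and t: M(n+1−l, n+1−j, n+1−i; u,s,t) = N(i,j,l; u,t,s). -/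
/-- The structure constant `N(i,j,l; u,s,t) = u^(1-2j)·(s + t·u^(2n)) = q^(1/2-j)·(s + t·qⁿ)`
(where `q = u²`) of the quantum Lie algebra `(sl_n)_h(t/s)`. -/
noncomputable def slnN {R : Type*} [CommRing R] (u : Rˣ) (s t : R) (n i j l : ℤ) : R :=
  (u ^ (1 - 2 * j) : Rˣ) * (s + t * (u ^ (2 * n) : Rˣ))

/-- The structure constant `M(k,i,j; u,s,t) = u^(2i-1)·(s + t·u^(-2n)) = q^(i-1/2)·(s + t·q⁻ⁿ)`
(where `q = u²`) of the quantum Lie algebra `(sl_n)_h(t/s)`. -/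
noncomputable def slnM {R : Type*} [CommRing R] (u : Rˣ) (s t : R) (n k i j : ℤ) : R :=
  (u ^ (2 * i - 1) : Rˣ) * (s + t * (u ^ (-(2 * n)) : Rˣ))

/-- under the Dynkin diagram map `τ` the structure constants `N` and `M` of
`(sl_n)_h` transform into each other with the parameters `s` and `t` interchanged:
for `n ≥ 2` and `1 ≤ i, j, l ≤ n`,
`M(n+1-l, n+1-j, n+1-i; u,s,t) = N(i,j,l; u,t,s)`. -/
theorem slnM_tau_transform {R : Type*} [CommRing R] (u : Rˣ) (s t : R) (n i j l : ℤ)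
    (hn : 2 ≤ n) (hi1 : 1 ≤ i) (hin : i ≤ n) (hj1 : 1 ≤ j) (hjn : j ≤ n)
    (hl1 : 1 ≤ l) (hln : l ≤ n) :
    slnM u s t n (n + 1 - l) (n + 1 - j) (n + 1 - i) = slnN u t s n i j l := by
  unfold slnM slnN
  have h1 : (2 * (n + 1 - j) - 1) = (1 - 2 * j) + 2 * n := by ring
  rw [h1, zpow_add, Units.val_mul]
  have h3 : ((u ^ (2 * n) : Rˣ) : R) * ((u ^ (-(2 * n)) : Rˣ) : R) = 1 := by
    rw [← Units.val_mul, ← zpow_add]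
    simp
  linear_combination ((u ^ (1 - 2 * j) : Rˣ) : R) * t * h3
end

section
/- Let A be a Hopf algebra over a commutative ring K with comultiplication Δ, antipode S, and adjoint action ad(x)(y) = Σ x₍₁₎ · y · S(x₍₂₎). Let n ∈ ℕ, let π : A → Matrix n n K be a K-algebra homomorphism, and let a ∈ A⊗A satisfy a · Δ(x) = Δ(x) · a for all x ∈ A. Set a_{ij} = (π_{ij} ⊗ id)(a) ∈ A, where π_{ij}(x) denotes the (i,j) entry of π(x). Then for all x ∈ A and all indices i, j: ad(x)(a_{ij}) = Σ_{k,l} (Σ π_{ik}(S(x₍₁₎)) · π_{lj}(x₍₂₎)) • a_{kl}, where the inner sum is the Sweedler sum over Δ(x). In other words, the elements a_{ij} span an ad-submodule of A on which x acts through the matrix coefficients of the representation π* ⊗ π, with π*_{ki}(x) = π_{ik}(S(x)). -/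
open TensorProduct

/-- The adjoint action of a Hopf algebra `A` on itself:
`ad x y = Σ x₍₁₎ · y · S(x₍₂₎)`, i.e. the image of `Δ(x)` under the linear map
`A ⊗ A → A` induced by `u ⊗ v ↦ u · y · S(v)`. -/
noncomputable def hopfAd (K : Type*) {A : Type*} [CommRing K] [Ring A] [HopfAlgebra K A]
    (x y : A) : A :=
  TensorProduct.lift
    (((LinearMap.mul K A) ∘ₗ (LinearMap.mulRight K y)).compl₂ (HopfAlgebra.antipode (R := K)))
    (Coalgebra.comul x)

/-- `(π_{ij} ⊗ id)(a) ∈ A` for `a ∈ A ⊗ A`: apply the matrix-entry functional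
`π_{ij} : A → K`, `x ↦ (π x) i j`, to the first tensor factor (identifying `K ⊗ A ≅ A`). -/
noncomputable def matrixCoeffTensor (K : Type*) {A n : Type*} [CommRing K] [Ring A]
    [HopfAlgebra K A] [Fintype n] [DecidableEq n]
    (π : A →ₐ[K] Matrix n n K) (a : A ⊗[K] A) (i j : n) : A :=
  TensorProduct.lift
    ((LinearMap.lsmul K A) ∘ₗ (Matrix.entryLinearMap K K i j) ∘ₗ π.toLinearMap) a

/-- The Sweedler sum `Σ π_{ik}(S(x₍₁₎)) · π_{lj}(x₍₂₎) ∈ K`, i.e. the image of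
`Δ(x) ∈ A ⊗ A` under the linear functional induced by
`u ⊗ v ↦ (π (S u)) i k · (π v) l j`.  These are the matrix coefficients of the
representation `π* ⊗ π`, where `π*_{ki}(x) = π_{ik}(S(x))` is the dual representation. -/
noncomputable def dualRepCoeff (K : Type*) {A n : Type*} [CommRing K] [Ring A]
    [HopfAlgebra K A] [Fintype n] [DecidableEq n]
    (π : A →ₐ[K] Matrix n n K) (i k l j : n) : A ⊗[K] A →ₗ[K] K :=
  TensorProduct.lift
    (((LinearMap.mul K K) ∘ₗ (Matrix.entryLinearMap K K i k) ∘ₗ π.toLinearMap ∘ₗ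
        (HopfAlgebra.antipode (R := K))).compl₂
      ((Matrix.entryLinearMap K K l j) ∘ₗ π.toLinearMap))

/-! In the convolution algebra of linear maps `A → A ⊗ A`, write `ι₁ = includeLeft`,
`ι₂ = includeRight` and `c = ε(·) • a`. Since `S` is the convolution inverse of `id`, the maps
`ι₁ ∘ S` and `ι₂ ∘ S` are the inverses of `ι₁` and `ι₂`; moreover `ι₁ * ι₂ = Δ`, and `c` commutes
with `Δ` because `a` commutes with every `Δ(x)`. Pure monoid algebra then gives
`ι₂ * c * (ι₂ ∘ S) = (ι₁ ∘ S) * c * ι₁`, that is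
`Σ (1 ⊗ x₍₁₎) a (1 ⊗ S x₍₂₎) = Σ (S x₍₁₎ ⊗ 1) a (x₍₂₎ ⊗ 1)`.
Applying `π_{ij} ⊗ id` turns the left side into `ad x (a_{ij})` and, `π` being multiplicative,
the right side into the stated combination of the `a_{kl}`. -/

open Coalgebra HopfAlgebra WithConv Algebra.TensorProduct

theorem mul_mul_eq_mul_mul_of_commute {M : Type*} [Monoid M] {p q r s c : M}
    (hpq : p * q = 1) (hrs : r * s = 1) (hc : Commute c (q * r)) :
    r * c * s = p * c * q := calc
  r * c * s = p * q * (r * c * s) := by rw [hpq, one_mul]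
  _ = p * (q * r * c) * s := by simp only [mul_assoc]
  _ = p * (c * (q * r)) * s := by rw [hc.eq]
  _ = p * c * q * (r * s) := by simp only [mul_assoc]
  _ = p * c * q := by rw [hrs, mul_one]

namespace LinearMap

section Coalgebra

variable {K C B : Type*} [CommSemiring K] [AddCommMonoid C] [Module K C] [Coalgebra K C]
  [Semiring B] [Algebra K B]

def counitSmul (b : B) : WithConv (C →ₗ[K] B) := toConv (toSpanSingleton K B b ∘ₗ counit)

theorem counitSmul_mul (b : B) (f : WithConv (C →ₗ[K] B)) :
    counitSmul b * f = toConv (mulLeft K b ∘ₗ f.ofConv) := by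
  ext x
  calc (counitSmul b * f : WithConv (C →ₗ[K] B)) x = b * (1 * f) x := by
        rw [(ℛ K x).convMul_apply, (ℛ K x).convMul_apply, Finset.mul_sum]
        refine Finset.sum_congr rfl fun i _ => ?_
        simp [counitSmul, Algebra.smul_def, Algebra.left_comm, mul_assoc]
    _ = _ := by rw [one_mul]; rfl

theorem mul_counitSmul (b : B) (f : WithConv (C →ₗ[K] B)) :
    f * counitSmul b = toConv (mulRight K b ∘ₗ f.ofConv) := by
  ext x
  calc (f * counitSmul b : WithConv (C →ₗ[K] B)) x = (f * 1) x * b := by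
        rw [(ℛ K x).convMul_apply, (ℛ K x).convMul_apply, Finset.sum_mul]
        refine Finset.sum_congr rfl fun i _ => ?_
        simp [counitSmul, Algebra.smul_def, mul_assoc]
    _ = _ := by rw [mul_one]; rfl

end Coalgebra

section HopfAlgebra

variable {K H : Type*} [CommSemiring K] [Semiring H] [HopfAlgebra K H]

theorem toConv_mul_toConv_comp_antipode {B : Type*} [Semiring B] [Algebra K B] (h : H →ₐ[K] B) :
    toConv h.toLinearMap * toConv (h.toLinearMap ∘ₗ antipode K) = 1 := by
  have := algHom_comp_convMul_distrib h (toConv id) (toConv (antipode K))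
  rw [id_mul_antipode] at this
  ext x
  simpa using congr($this x).symm

theorem toConv_comp_antipode_mul_toConv {B : Type*} [Semiring B] [Algebra K B] (h : H →ₐ[K] B) :
    toConv (h.toLinearMap ∘ₗ antipode K) * toConv h.toLinearMap = 1 := by
  have := algHom_comp_convMul_distrib h (toConv (antipode K)) (toConv id)
  rw [antipode_mul_id] at this
  ext x
  simpa using congr($this x).symm

theorem toConv_includeLeft_mul_toConv_includeRight :
    toConv (includeLeft : H →ₐ[K] H ⊗[K] H).toLinearMap * toConv includeRight.toLinearMap =
      toConv (comul (R := K) (A := H)) := by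
  ext x
  simp [(ℛ K x).convMul_apply, (ℛ K x).eq]

variable {a : H ⊗[K] H}

theorem commute_counitSmul_toConv_comul (ha : ∀ x : H, a * comul x = comul x * a) :
    Commute (counitSmul a) (toConv (comul (R := K) (A := H))) := by
  rw [Commute, SemiconjBy, counitSmul_mul, mul_counitSmul]
  ext x
  exact ha x

theorem toConv_includeRight_mul_counitSmul_mul_eq (ha : ∀ x : H, a * comul x = comul x * a) :
    toConv includeRight.toLinearMap * counitSmul a *
        toConv (includeRight.toLinearMap ∘ₗ antipode K) =
      toConv ((includeLeft : H →ₐ[K] H ⊗[K] H).toLinearMap ∘ₗ antipode K) * counitSmul a *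
        toConv (includeLeft : H →ₐ[K] H ⊗[K] H).toLinearMap :=
  mul_mul_eq_mul_mul_of_commute (toConv_comp_antipode_mul_toConv _)
    (toConv_mul_toConv_comp_antipode _)
    (by rw [toConv_includeLeft_mul_toConv_includeRight]; exact commute_counitSmul_toConv_comul ha)

end HopfAlgebra

end LinearMap

namespace HopfAlgebra

variable {K H : Type*} [CommSemiring K] [Semiring H] [HopfAlgebra K H] {a : H ⊗[K] H}

theorem sum_one_tmul_mul_mul_one_tmul_antipode_eq (ha : ∀ x : H, a * comul x = comul x * a)
    {x : H} {ι : Type*} (r : Coalgebra.Repr K x ι) :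
    ∑ i ∈ r.index, (1 ⊗ₜ r.left i) * a * (1 ⊗ₜ antipode K (r.right i)) =
      ∑ i ∈ r.index, (antipode K (r.left i) ⊗ₜ 1) * a * (r.right i ⊗ₜ 1) := by
  simpa [r.convMul_apply, LinearMap.mul_counitSmul] using
    congr($(LinearMap.toConv_includeRight_mul_counitSmul_mul_eq ha) x)

end HopfAlgebra

section MatrixCoeff

variable {K A n : Type*} [CommRing K] [Ring A] [HopfAlgebra K A] [Fintype n] [DecidableEq n]
  (π : A →ₐ[K] Matrix n n K)

@[simp]
theorem matrixCoeffTensor_tmul (p q : A) (i j : n) :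
    matrixCoeffTensor K π (p ⊗ₜ q) i j = π p i j • q := rfl

@[simp]
theorem matrixCoeffTensor_zero (i j : n) : matrixCoeffTensor K π 0 i j = 0 :=
  map_zero _

@[simp]
theorem matrixCoeffTensor_add (s t : A ⊗[K] A) (i j : n) :
    matrixCoeffTensor K π (s + t) i j =
      matrixCoeffTensor K π s i j + matrixCoeffTensor K π t i j :=
  map_add _ _ _

theorem matrixCoeffTensor_sum {ι : Type*} (S : Finset ι) (t : ι → A ⊗[K] A) (i j : n) :
    matrixCoeffTensor K π (∑ s ∈ S, t s) i j = ∑ s ∈ S, matrixCoeffTensor K π (t s) i j :=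
  map_sum _ _ _

theorem matrixCoeffTensor_one_tmul_mul_mul_one_tmul (u v : A) (t : A ⊗[K] A) (i j : n) :
    matrixCoeffTensor K π ((1 ⊗ₜ u) * t * (1 ⊗ₜ v)) i j =
      u * matrixCoeffTensor K π t i j * v := by
  induction t using TensorProduct.induction_on with
  | zero => simp
  | tmul p q => simp [mul_assoc]
  | add s t hs ht => simp [mul_add, add_mul, hs, ht]

theorem matrixCoeffTensor_tmul_one_mul_mul_tmul_one (u v : A) (t : A ⊗[K] A) (i j : n) :
    matrixCoeffTensor K π ((u ⊗ₜ 1) * t * (v ⊗ₜ 1)) i j =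
      ∑ k : n, ∑ l : n, (π u i k * π v l j) • matrixCoeffTensor K π t k l := by
  induction t using TensorProduct.induction_on with
  | zero => simp
  | tmul p q =>
    simp only [Algebra.TensorProduct.tmul_mul_tmul, one_mul, mul_one, matrixCoeffTensor_tmul,
      map_mul, Matrix.mul_apply, Finset.sum_mul, Finset.sum_smul, smul_smul]
    rw [Finset.sum_comm]
    refine Finset.sum_congr rfl fun l _ => Finset.sum_congr rfl fun k _ => ?_
    ring_nf
  | add s t hs ht => simp only [mul_add, add_mul, matrixCoeffTensor_add, hs, ht, smul_add,
      Finset.sum_add_distrib]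

end MatrixCoeff

section Sweedler

variable {K A : Type*} [CommRing K] [Ring A] [HopfAlgebra K A] {x : A} {ι : Type*}
  (r : Coalgebra.Repr K x ι)

theorem hopfAd_eq_sum (y : A) :
    hopfAd K x y = ∑ s ∈ r.index, r.left s * y * antipode K (r.right s) := by
  simp [hopfAd, ← r.eq, map_sum]

theorem dualRepCoeff_comul_eq_sum {n : Type*} [Fintype n] [DecidableEq n]
    (π : A →ₐ[K] Matrix n n K) (i k l j : n) :
    dualRepCoeff K π i k l j (comul x) =
      ∑ s ∈ r.index, π (antipode K (r.left s)) i k * π (r.right s) l j := by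
  simp [dualRepCoeff, ← r.eq, map_sum]

end Sweedler

/-- let `A` be a Hopf algebra over `K`, `π : A → Matrix n n K` a `K`-algebra
homomorphism and `a ∈ A ⊗ A` an element commuting with all coproducts `Δ(x)`.  Setting
`a_{ij} = (π_{ij} ⊗ id)(a)`, the adjoint action satisfies
`ad x (a_{ij}) = Σ_{k,l} (Σ π_{ik}(S(x₍₁₎)) · π_{lj}(x₍₂₎)) • a_{kl}`:
the elements `a_{ij}` span an ad-submodule of `A` on which `x` acts through the matrix
coefficients of `π* ⊗ π`. -/
theorem ad_matrixCoeffTensor {K A n : Type*} [CommRing K] [Ring A] [HopfAlgebra K A]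
    [Fintype n] [DecidableEq n]
    (π : A →ₐ[K] Matrix n n K) (a : A ⊗[K] A)
    (ha : ∀ x : A, a * Coalgebra.comul x = Coalgebra.comul x * a)
    (x : A) (i j : n) :
    hopfAd K x (matrixCoeffTensor K π a i j)
      = ∑ k : n, ∑ l : n,
          dualRepCoeff K π i k l j (Coalgebra.comul x) • matrixCoeffTensor K π a k l := by
  let r := ℛ K x
  calc hopfAd K x (matrixCoeffTensor K π a i j)
      = matrixCoeffTensor K π
          (∑ s ∈ r.index, (1 ⊗ₜ r.left s) * a * (1 ⊗ₜ antipode K (r.right s))) i j := by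
        simp only [hopfAd_eq_sum r, matrixCoeffTensor_sum,
          matrixCoeffTensor_one_tmul_mul_mul_one_tmul]
    _ = matrixCoeffTensor K π
          (∑ s ∈ r.index, (antipode K (r.left s) ⊗ₜ 1) * a * (r.right s ⊗ₜ 1)) i j := by
        rw [sum_one_tmul_mul_mul_one_tmul_antipode_eq ha r]
    _ = ∑ k : n, ∑ l : n,
          dualRepCoeff K π i k l j (Coalgebra.comul x) • matrixCoeffTensor K π a k l := by
        simp only [matrixCoeffTensor_sum, matrixCoeffTensor_tmul_one_mul_mul_tmul_one,
          dualRepCoeff_comul_eq_sum r, Finset.sum_smul]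
        rw [Finset.sum_comm]
        exact Finset.sum_congr rfl fun k _ => Finset.sum_comm
end
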